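/- If the nonstationary ideal on ω₁ is saturated, then for every uncountable cardinal κ and every stationary set S ⊆ [κ]^ω there exists a stationary A ⊆ ω₁ such that S is projective stationary above A. -/

import Mathlib

open Set Cardinal

noncomputable section

/-- The first uncountable ordinal `ω₁`. -/
def omega1 : Ordinal.{0} := (Cardinal.aleph 1).ord

/-- `x ∩ ω₁` is a countable ordinal. -/
def GoodSet (x : Set Ordinal.{0}) : Prop :=
  ∃ δ < omega1, x ∩ Set.Iio omega1 = Set.Iio δ

/-- `δ_x`: the countable ordinal `x ∩ ω₁`. -/
def delta (x : Set Ordinal.{0}) : Ordinal.{0} :=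
  sInf {δ : Ordinal.{0} | x ∩ Set.Iio omega1 = Set.Iio δ}

/-- The space `[X]^ω` of countable subsets of `X` (restricted, as in the paper,
to those `x` whose intersection with `ω₁` is a countable ordinal). -/
def countPow (X : Set Ordinal.{0}) : Set (Set Ordinal.{0}) :=
  {x | x ⊆ X ∧ x.Countable ∧ GoodSet x}

/-- `C` is club in `[X]^ω`: it is cofinal and closed under unions of countable
`⊆`-increasing chains. -/
def IsClubIn (X : Set Ordinal.{0}) (C : Set (Set Ordinal.{0})) : Prop :=
  C ⊆ countPow X ∧ (∀ x ∈ countPow X, ∃ y ∈ C, x ⊆ y) ∧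
    ∀ D : Set (Set Ordinal.{0}), D ⊆ C → D.Countable → D.Nonempty →
      IsChain (· ⊆ ·) D → ⋃₀ D ∈ C

/-- `S` is stationary in `[X]^ω`: it meets every club. -/
def IsStatIn (X : Set Ordinal.{0}) (S : Set (Set Ordinal.{0})) : Prop :=
  ∀ C, IsClubIn X C → (S ∩ C).Nonempty

/-- Club subsets of `ω₁` (closed unbounded in the ordinal `ω₁`). -/
def IsClubOmega1 (C : Set Ordinal.{0}) : Prop :=
  C ⊆ Set.Iio omega1 ∧ (∀ α < omega1, ∃ β ∈ C, α < β) ∧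
    ∀ α < omega1, α ≠ 0 → (∀ β < α, ∃ γ ∈ C, β < γ ∧ γ < α) → α ∈ C

/-- Stationary subsets of `ω₁`. -/
def IsStatOmega1 (A : Set Ordinal.{0}) : Prop :=
  ∀ C, IsClubOmega1 C → (A ∩ C).Nonempty

/-- A (continuous, `δ`-increasing) `ω₁`-chain: `⟨f α : α < ω₁⟩`. -/
def IsOmega1Chain (f : Ordinal.{0} → Set Ordinal.{0}) : Prop :=
  (∀ α β, α < β → β < omega1 → f α ⊆ f β) ∧
  (∀ β < omega1, Order.IsSuccLimit β → f β = ⋃ α ∈ Set.Iio β, f α) ∧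
  (∀ α β, α < β → β < omega1 → delta (f α) < delta (f β))

/-- The space `[Y]^{ω₁}` of subsets of `Y` of cardinality `ℵ₁`. -/
def aleph1Pow (Y : Set Ordinal.{0}) : Set (Set Ordinal.{0}) :=
  {X | X ⊆ Y ∧ Cardinal.mk X = Cardinal.aleph 1}

/-- `C` is club in `[Y]^{ω₁}`: cofinal and closed under unions of
`⊆`-increasing chains of length `ω₁`. -/
def IsClubAleph1 (Y : Set Ordinal.{0}) (C : Set (Set Ordinal.{0})) : Prop :=
  C ⊆ aleph1Pow Y ∧ (∀ X ∈ aleph1Pow Y, ∃ Z ∈ C, X ⊆ Z) ∧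
    ∀ f : Ordinal.{0} → Set Ordinal.{0}, (∀ α β, α < β → β < omega1 → f α ⊆ f β) →
      (∀ α < omega1, f α ∈ C) → (⋃ α ∈ Set.Iio omega1, f α) ∈ C

/-- `S` is a local club in `[Y]^ω`: the set of `X ∈ [Y]^{ω₁}` such that
`S ∩ [X]^ω` contains a club in `[X]^ω` contains a club in `[Y]^{ω₁}`. -/
def IsLocalClub (Y : Set Ordinal.{0}) (S : Set (Set Ordinal.{0})) : Prop :=
  ∃ C, IsClubAleph1 Y C ∧ ∀ X ∈ C, ∃ D, IsClubIn X D ∧ D ⊆ S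

/-- `S` is projective stationary in `[X]^ω`. -/
def ProjStationary (X : Set Ordinal.{0}) (S : Set (Set Ordinal.{0})) : Prop :=
  ∀ A ⊆ Set.Iio omega1, IsStatOmega1 A → IsStatIn X {x ∈ S | delta x ∈ A}

/-- `S ⊆ [κ]^ω` is spanning. -/
def IsSpanning (κ : Cardinal) (S : Set (Set Ordinal.{0})) : Prop :=
  ∀ lam : Cardinal, κ ≤ lam → ∀ C, IsClubIn (Set.Iio lam.ord) C →
    ∃ D, IsClubIn (Set.Iio lam.ord) D ∧
      ∀ x ∈ D, ∃ y ∈ C, x ⊆ y ∧ delta x = delta y ∧ (y ∩ Set.Iio κ.ord) ∈ S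

/-- `S ⊆ [X]^ω` is reflective: for every club `C`, `S ∩ C` contains an `ω₁`-chain. -/
def IsReflective (X : Set Ordinal.{0}) (S : Set (Set Ordinal.{0})) : Prop :=
  ∀ C, IsClubIn X C → ∃ f, IsOmega1Chain f ∧ ∀ α < omega1, f α ∈ S ∩ C

/-- `S ⊆ [X]^ω` is full. -/
def IsFull (X : Set Ordinal.{0}) (S : Set (Set Ordinal.{0})) : Prop :=
  ∀ A ⊆ Set.Iio omega1, IsStatOmega1 A →
    ∃ B, B ⊆ A ∧ IsStatOmega1 B ∧ ∃ C, IsClubIn X C ∧ {x ∈ C | delta x ∈ B} ⊆ S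

/-- The order type of a set of ordinals. -/
def otp (s : Set Ordinal.{0}) : Ordinal.{0} :=
  sInf {o : Ordinal.{0} | Nonempty (↥s ≃o ↥(Set.Iio o))}

/-- The nonstationary ideal on `ω₁` is saturated. -/
def NSSaturated : Prop :=
  ∀ W : Set (Set Ordinal.{0}), (∀ A ∈ W, A ⊆ Set.Iio omega1 ∧ IsStatOmega1 A) →
    (∀ A ∈ W, ∀ B ∈ W, A ≠ B → ¬ IsStatOmega1 (A ∩ B)) →
    Cardinal.mk W ≤ Cardinal.aleph 1

section Aux

lemma omega1_pos : 0 < omega1 := by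
  have : (0:Cardinal).ord < (Cardinal.aleph 1).ord :=
    Cardinal.ord_lt_ord.mpr (Cardinal.aleph_pos 1)
  simpa [omega1, Cardinal.ord_zero] using this

lemma Iio_inj' {a b : Ordinal.{0}} (h : Set.Iio a = Set.Iio b) : a = b :=
  le_antisymm (Set.Iio_subset_Iio_iff.mp h.le) (Set.Iio_subset_Iio_iff.mp h.ge)

lemma delta_eq {x : Set Ordinal.{0}} {δ : Ordinal.{0}} (h : x ∩ Set.Iio omega1 = Set.Iio δ) :
    delta x = δ := by
  have : {δ' : Ordinal.{0} | x ∩ Set.Iio omega1 = Set.Iio δ'} = {δ} := by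
    ext δ'
    simp only [Set.mem_setOf_eq, Set.mem_singleton_iff]
    constructor
    · intro h'; exact Iio_inj' (h'.symm.trans h)
    · rintro rfl; exact h
  rw [delta, this, csInf_singleton]

lemma good_spec {x : Set Ordinal.{0}} (hx : GoodSet x) :
    x ∩ Set.Iio omega1 = Set.Iio (delta x) ∧ delta x < omega1 := by
  obtain ⟨δ, hδ, h⟩ := hx
  rw [delta_eq h]; exact ⟨h, hδ⟩

lemma delta_mono {x y : Set Ordinal.{0}} (hx : GoodSet x) (hy : GoodSet y) (h : x ⊆ y) :
    delta x ≤ delta y := by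
  have h1 := (good_spec hx).1; have h2 := (good_spec hy).1
  refine Set.Iio_subset_Iio_iff.mp ?_
  rw [← h1, ← h2]; exact Set.inter_subset_inter_left _ h

lemma mem_of_lt_delta {x : Set Ordinal.{0}} (hx : GoodSet x) {γ : Ordinal.{0}}
    (h : γ < delta x) : γ ∈ x := by
  have h1 := (good_spec hx).1
  have : γ ∈ Set.Iio (delta x) := h
  rw [← h1] at this; exact this.1

lemma aleph_one_lift :
    Cardinal.lift.{1,0} (Cardinal.aleph.{0} 1) = Cardinal.aleph.{1} 1 := by
  rw [Cardinal.lift_aleph.{0,1}, Ordinal.lift_one]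

lemma countable_Iio {β : Ordinal.{0}} (h : β < omega1) : (Set.Iio β).Countable := by
  rw [Cardinal.countable_iff_lt_aleph_one, Ordinal.mk_Iio_ordinal, ← aleph_one_lift]
  exact Cardinal.lift_lt.mpr (Cardinal.lt_ord.mp h)

lemma not_countable_Iio_omega1 : ¬ (Set.Iio omega1).Countable := by
  rw [Cardinal.countable_iff_lt_aleph_one, Ordinal.mk_Iio_ordinal, omega1,
    Cardinal.card_ord, ← aleph_one_lift]
  exact lt_irrefl _

lemma lower_good {U : Set Ordinal.{0}} (hc : U.Countable) (hsub : U ⊆ Set.Iio omega1)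
    (hlow : ∀ γ γ', γ ≤ γ' → γ' ∈ U → γ ∈ U) : ∃ δ < omega1, U = Set.Iio δ := by
  have hne : {β : Ordinal.{0} | U ⊆ Set.Iio β}.Nonempty := ⟨omega1, hsub⟩
  set δ := sInf {β : Ordinal.{0} | U ⊆ Set.Iio β} with hδ
  have hmem : U ⊆ Set.Iio δ := csInf_mem hne
  have heq : U = Set.Iio δ := by
    refine Set.Subset.antisymm hmem fun γ hγ => ?_
    by_contra hγU
    have : U ⊆ Set.Iio γ := by
      intro γ' hγ'
      by_contra h'
      exact hγU (hlow γ γ' (not_lt.mp h') hγ')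
    have : δ ≤ γ := csInf_le' this
    exact absurd hγ (not_lt.mpr this)
  refine ⟨δ, ?_, heq⟩
  have hle : δ ≤ omega1 := csInf_le' hsub
  rcases lt_or_eq_of_le hle with h | h
  · exact h
  · exfalso; rw [heq, h] at hc; exact not_countable_Iio_omega1 hc

end Aux
section Aux2

lemma sUnion_countPow {X : Set Ordinal.{0}} {D : Set (Set Ordinal.{0})}
    (hD : D ⊆ countPow X) (hc : D.Countable) (hne : D.Nonempty) : ⋃₀ D ∈ countPow X := by
  have hcount : (⋃₀ D).Countable := Set.Countable.sUnion hc (fun d hd => (hD hd).2.1)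
  refine ⟨?_, hcount, ?_⟩
  · intro γ hγ
    obtain ⟨d, hd, hγd⟩ := hγ
    exact (hD hd).1 hγd
  · apply lower_good (hcount.mono (Set.inter_subset_left)) Set.inter_subset_right
    rintro γ γ' hle ⟨⟨d, hd, hγ'd⟩, hγ'ω⟩
    have hg := good_spec (hD hd).2.2
    have : γ' ∈ Set.Iio (delta d) := by rw [← hg.1]; exact ⟨hγ'd, hγ'ω⟩
    have hγd : γ ∈ Set.Iio (delta d) := lt_of_le_of_lt hle this
    rw [← hg.1] at hγd
    exact ⟨⟨d, hd, hγd.1⟩, hγd.2⟩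

lemma exists_delta_gt {D : Set (Set Ordinal.{0})} {X : Set Ordinal.{0}}
    (hD : D ⊆ countPow X) (hU : GoodSet (⋃₀ D)) {γ : Ordinal.{0}}
    (h : γ < delta (⋃₀ D)) : ∃ d ∈ D, γ < delta d := by
  have hg := good_spec hU
  have : γ ∈ (⋃₀ D) ∩ Set.Iio omega1 := by rw [hg.1]; exact h
  obtain ⟨⟨d, hd, hγd⟩, hγω⟩ := this
  refine ⟨d, hd, ?_⟩
  have hgd := good_spec (hD hd).2.2
  have : γ ∈ Set.Iio (delta d) := by rw [← hgd.1]; exact ⟨hγd, hγω⟩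
  exact this

lemma countPow_club (X : Set Ordinal.{0}) : IsClubIn X (countPow X) :=
  ⟨le_refl _, fun x hx => ⟨x, hx, le_refl _⟩, fun D hD hc hne _ => sUnion_countPow hD hc hne⟩

/-- Union of a monotone ℕ-sequence. -/
lemma range_chain {y : ℕ → Set Ordinal.{0}} (hmono : Monotone y) :
    IsChain (· ⊆ ·) (Set.range y) := by
  rintro _ ⟨m, rfl⟩ _ ⟨n, rfl⟩ _
  rcases le_total m n with h | h
  · exact Or.inl (hmono h)
  · exact Or.inr (hmono h)

lemma mem_club_of_tail {X : Set Ordinal.{0}} {C : Set (Set Ordinal.{0})}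
    (hC : IsClubIn X C) {y : ℕ → Set Ordinal.{0}} (hmono : Monotone y)
    {g : ℕ → ℕ} (hg : ∀ j, j ≤ g j) (hgC : ∀ j, y (g j) ∈ C) :
    (⋃ m, y m) ∈ C := by
  have hsub : Set.range (fun j => y (g j)) ⊆ Set.range y := by
    rintro _ ⟨j, rfl⟩; exact ⟨g j, rfl⟩
  have hchain : IsChain (· ⊆ ·) (Set.range (fun j => y (g j))) :=
    (range_chain hmono).mono hsub
  have heq : (⋃ m, y m) = ⋃₀ Set.range (fun j => y (g j)) := by
    apply Set.Subset.antisymm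
    · intro γ hγ
      obtain ⟨m, hm⟩ := Set.mem_iUnion.mp hγ
      exact ⟨y (g m), ⟨m, rfl⟩, hmono (hg m) hm⟩
    · rintro γ ⟨_, ⟨j, rfl⟩, hγ⟩
      exact Set.mem_iUnion.mpr ⟨g j, hγ⟩
  rw [heq]
  exact hC.2.2 _ (fun d ⟨j, hj⟩ => hj ▸ hgC j) (Set.countable_range _)
    ⟨y (g 0), 0, rfl⟩ hchain

end Aux2
section Aux3

open Classical in
lemma exists_step {X : Set Ordinal.{0}} {C : Set (Set Ordinal.{0})} (hC : IsClubIn X C) :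
    ∃ F : Set Ordinal.{0} → Set Ordinal.{0},
      ∀ z ∈ countPow X, F z ∈ C ∧ z ⊆ F z := by
  classical
  refine ⟨fun z => if h : z ∈ countPow X then Classical.choose (hC.2.1 z h) else z,
    fun z hz => ?_⟩
  simp only [dif_pos hz]
  obtain ⟨h1, h2⟩ := Classical.choose_spec (hC.2.1 z hz)
  exact ⟨h1, h2⟩

lemma iInter_clubs {X : Set Ordinal.{0}} (F : ℕ → Set (Set Ordinal.{0}))
    (hF : ∀ n, IsClubIn X (F n)) : IsClubIn X (⋂ n, F n) := by
  have hsub : (⋂ n, F n) ⊆ countPow X := (Set.iInter_subset F 0).trans (hF 0).1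
  refine ⟨hsub, ?_, ?_⟩
  · intro x hx
    choose Φ hΦ using fun n => exists_step (hF n)
    set y : ℕ → Set Ordinal.{0} :=
      fun m => Nat.rec x (fun m ym => Φ (Nat.unpair m).1 ym) m with hy
    have hy0 : y 0 = x := rfl
    have hysucc : ∀ m, y (m+1) = Φ (Nat.unpair m).1 (y m) := fun m => rfl
    have hyP : ∀ m, y m ∈ countPow X ∧ y m ⊆ y (m+1) ∧ y (m+1) ∈ F (Nat.unpair m).1 := by
      intro m
      induction m with
      | zero =>
        refine ⟨hx, ?_, ?_⟩
        · rw [hy0, hysucc]; exact (hΦ _ _ hx).2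
        · rw [hysucc]; exact (hΦ _ _ (hy0 ▸ hx)).1
      | succ k ih =>
        have hk : y (k+1) ∈ countPow X := (hF _).1 ih.2.2
        refine ⟨hk, ?_, ?_⟩
        · rw [hysucc]; exact (hΦ _ _ hk).2
        · rw [hysucc]; exact (hΦ _ _ hk).1
    have hmono : Monotone y := monotone_nat_of_le_succ (fun m => (hyP m).2.1)
    refine ⟨⋃ m, y m, ?_, ?_⟩
    · rw [Set.mem_iInter]
      intro n
      refine mem_club_of_tail (hF n) hmono (g := fun j => Nat.pair n j + 1)
        (fun j => (Nat.right_le_pair n j).trans (Nat.le_succ _)) (fun j => ?_)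
      have := (hyP (Nat.pair n j)).2.2
      rwa [Nat.unpair_pair] at this
    · rw [← hy0]; exact Set.subset_iUnion y 0
  · intro D hD hc hne hchain
    rw [Set.mem_iInter]
    intro n
    exact (hF n).2.2 D (hD.trans (Set.iInter_subset F n)) hc hne hchain

end Aux3
section Aux4

lemma omega1_le_ord {κ : Cardinal.{0}} (hκ : Cardinal.aleph0 < κ) : omega1 ≤ κ.ord := by
  have h1 : Cardinal.aleph 1 ≤ κ := by
    have : Cardinal.aleph 1 = Order.succ (Cardinal.aleph 0) := by
      rw [← Cardinal.aleph_succ]; norm_num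
    rw [this, Cardinal.aleph_zero]
    exact Order.succ_le_of_lt hκ
  exact Cardinal.ord_le_ord.mpr h1

lemma stat_Iio_omega1 : IsStatOmega1 (Set.Iio omega1) := by
  intro C hC
  obtain ⟨β, hβC, _⟩ := hC.2.1 0 omega1_pos
  exact ⟨β, hC.1 hβC, hβC⟩

lemma Ioo_club {α₀ : Ordinal.{0}} (h : α₀ < omega1) :
    IsClubOmega1 {γ | α₀ < γ ∧ γ < omega1} := by
  refine ⟨fun γ hγ => hγ.2, ?_, ?_⟩
  · intro α hα
    have hmax : max α α₀ < omega1 := max_lt hα h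
    have hsucc : Order.succ (max α α₀) < omega1 := by
      have ho : Order.IsSuccLimit omega1 := by
        unfold omega1
        exact Cardinal.isSuccLimit_ord (le_of_lt Cardinal.aleph0_lt_aleph_one)
      exact ho.succ_lt hmax
    refine ⟨Order.succ (max α α₀), ⟨?_, hsucc⟩, ?_⟩
    · exact lt_of_le_of_lt (le_max_right α α₀) (Order.lt_succ _)
    · exact lt_of_le_of_lt (le_max_left α α₀) (Order.lt_succ _)
  · intro α hα hα0 hcl
    rcases lt_or_ge α₀ α with h' | h'
    · obtain ⟨γ, hγ, _, hγα⟩ := hcl α₀ h'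
      exact ⟨lt_trans hγ.1 hγα, hα⟩
    · -- α ≤ α₀ : show contradiction is not needed; if α ≤ α₀ then pick β < α, get γ ∈ Ioo with γ < α ≤ α₀, but γ > α₀. contradiction only if ∃ β < α i.e. α ≠ 0
      have : ∃ β, β < α := pos_iff_ne_zero.mpr hα0 |> fun h0 => ⟨0, h0⟩
      obtain ⟨β, hβ⟩ := this
      obtain ⟨γ, hγ, _, hγα⟩ := hcl β hβ
      exact absurd hγ.1 (not_lt.mpr (le_trans (le_of_lt hγα) h'))

lemma nonstatIn_iff {X : Set Ordinal.{0}} {T : Set (Set Ordinal.{0})}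
    (h : ¬ IsStatIn X T) : ∃ C, IsClubIn X C ∧ T ∩ C = ∅ := by
  rw [IsStatIn] at h
  push_neg at h
  obtain ⟨C, hC, hTC⟩ := h
  exact ⟨C, hC, hTC⟩

lemma nonstatOmega1_iff {N : Set Ordinal.{0}} (h : ¬ IsStatOmega1 N) :
    ∃ K, IsClubOmega1 K ∧ N ∩ K = ∅ := by
  rw [IsStatOmega1] at h
  push_neg at h
  obtain ⟨K, hK, hNK⟩ := h
  exact ⟨K, hK, hNK⟩

/-- step into a club of ω₁: extend x so that its delta lands in K -/
lemma exists_stepK {κ : Cardinal.{0}} (hκ : Cardinal.aleph0 < κ) {K : Set Ordinal.{0}}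
    (hK : IsClubOmega1 K) {x : Set Ordinal.{0}} (hx : x ∈ countPow (Set.Iio κ.ord)) :
    ∃ z ∈ countPow (Set.Iio κ.ord), x ⊆ z ∧ delta z ∈ K ∧ delta x < delta z := by
  obtain ⟨hxX, hxc, hxg⟩ := hx
  have hδ := good_spec hxg
  obtain ⟨β, hβK, hβgt⟩ := hK.2.1 (delta x) hδ.2
  have hβω : β < omega1 := hK.1 hβK
  have heq : (x ∪ Set.Iio β) ∩ Set.Iio omega1 = Set.Iio β := by
    rw [Set.union_inter_distrib_right, hδ.1,
      Set.inter_eq_self_of_subset_left (Set.Iio_subset_Iio (le_of_lt hβω)),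
      Set.union_eq_self_of_subset_left (Set.Iio_subset_Iio (le_of_lt hβgt))]
  have hdz : delta (x ∪ Set.Iio β) = β := delta_eq heq
  refine ⟨x ∪ Set.Iio β, ⟨?_, hxc.union (countable_Iio hβω), ⟨β, hβω, heq⟩⟩,
    Set.subset_union_left, ?_, ?_⟩
  · refine Set.union_subset hxX ?_
    intro γ hγ
    exact lt_of_lt_of_le (lt_trans hγ hβω) (omega1_le_ord hκ)
  · rw [hdz]; exact hβK
  · rw [hdz]; exact hβgt

end Aux4
section Aux5

lemma exists_enum : ∃ e : Ordinal.{0} → ℕ → Ordinal.{0},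
    ∀ δ, 0 < δ → δ < omega1 → ∀ α < δ, ∃ n, e δ n = α := by
  classical
  have H : ∀ δ : Ordinal.{0}, ∃ f : ℕ → Ordinal.{0},
      (0 < δ → δ < omega1 → ∀ α < δ, ∃ n, f n = α) := by
    intro δ
    by_cases h : 0 < δ ∧ δ < omega1
    · obtain ⟨f, hf⟩ := (countable_Iio h.2).exists_eq_range ⟨0, h.1⟩
      refine ⟨f, fun _ _ α hα => ?_⟩
      have : α ∈ Set.range f := by rw [← hf]; exact hα
      obtain ⟨n, hn⟩ := this
      exact ⟨n, hn⟩
    · refine ⟨fun _ => 0, fun h1 h2 => absurd ⟨h1, h2⟩ h⟩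
  choose e he using H
  exact ⟨e, fun δ h1 h2 => he δ h1 h2⟩

variable {κ : Cardinal.{0}} {K : Set Ordinal.{0}} {C : Ordinal.{0} → Set (Set Ordinal.{0})}

lemma exists_Phi (hκ : Cardinal.aleph0 < κ) (hK : IsClubOmega1 K)
    (hC : ∀ α, IsClubIn (Set.Iio κ.ord) (C α)) :
    ∃ Φ : Set Ordinal.{0} → Set Ordinal.{0}, ∀ z ∈ countPow (Set.Iio κ.ord),
      z ⊆ Φ z ∧ Φ z ∈ countPow (Set.Iio κ.ord) ∧
      ∃ β ∈ K, delta z < β ∧ β ≤ delta (Φ z) ∧ ∀ α < β, Φ z ∈ C α := by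
  classical
  obtain ⟨e, he⟩ := exists_enum
  have hint : ∀ δ : Ordinal.{0}, IsClubIn (Set.Iio κ.ord) (⋂ n, C (e δ n)) :=
    fun δ => iInter_clubs _ (fun n => hC _)
  choose F hF using fun δ => exists_step (hint δ)
  refine ⟨fun z => if h : z ∈ countPow (Set.Iio κ.ord) then
      F (delta (Classical.choose (exists_stepK hκ hK h)))
        (Classical.choose (exists_stepK hκ hK h)) else z, ?_⟩
  intro z hz
  simp only [dif_pos hz]
  obtain ⟨hz'P, hzz', hz'K, hz'δ⟩ := Classical.choose_spec (exists_stepK hκ hK hz)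
  set z' := Classical.choose (exists_stepK hκ hK hz) with hz'def
  set β := delta z' with hβdef
  obtain ⟨hFmem, hFsub⟩ := hF β z' hz'P
  have hFP : F β z' ∈ countPow (Set.Iio κ.ord) := (hint β).1 hFmem
  refine ⟨hzz'.trans hFsub, hFP, β, hz'K, hz'δ,
    delta_mono hz'P.2.2 hFP.2.2 hFsub, ?_⟩
  intro α hα
  have hβω : β < omega1 := hK.1 hz'K
  have h0 : 0 < β := lt_of_le_of_lt (zero_le (a := α)) hα
  obtain ⟨n, hn⟩ := he β h0 hβω α hα
  have := Set.mem_iInter.mp hFmem n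
  rwa [hn] at this

lemma Dstar_club (hκ : Cardinal.aleph0 < κ) (hK : IsClubOmega1 K)
    (hC : ∀ α, IsClubIn (Set.Iio κ.ord) (C α)) :
    IsClubIn (Set.Iio κ.ord)
      {x | x ∈ countPow (Set.Iio κ.ord) ∧ delta x ∈ K ∧ ∀ α < delta x, x ∈ C α} := by
  set X := Set.Iio κ.ord with hX
  refine ⟨fun x hx => hx.1, ?_, ?_⟩
  · -- cofinal
    intro x hx
    obtain ⟨Φ, hΦ⟩ := exists_Phi hκ hK hC
    set y : ℕ → Set Ordinal.{0} := fun m => Nat.rec x (fun _ ym => Φ ym) m with hy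
    have hysucc : ∀ m, y (m+1) = Φ (y m) := fun m => rfl
    have hyP : ∀ m, y m ∈ countPow X := by
      intro m
      induction m with
      | zero => exact hx
      | succ k ih => rw [hysucc]; exact (hΦ _ ih).2.1
    have hmono : Monotone y :=
      monotone_nat_of_le_succ (fun m => by rw [hysucc]; exact (hΦ _ (hyP m)).1)
    choose βf hβK hβgt hβle hβC using fun m => (hΦ (y m) (hyP m)).2.2
    set Y := ⋃ m, y m with hY
    have hYU : Y = ⋃₀ Set.range y := (Set.sUnion_range y).symm
    have hYP : Y ∈ countPow X := by
      rw [hYU]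
      exact sUnion_countPow (by rintro _ ⟨m, rfl⟩; exact hyP m) (Set.countable_range y)
        ⟨x, 0, rfl⟩
    have hdYm : ∀ m, delta (y m) < delta Y := by
      intro m
      have h1 : delta (y m) < delta (y (m+1)) := by
        rw [hysucc]; exact lt_of_lt_of_le (hβgt m) (hβle m)
      have h2 : delta (y (m+1)) ≤ delta Y :=
        delta_mono (hyP (m+1)).2.2 hYP.2.2 (Set.subset_iUnion y (m+1))
      exact lt_of_lt_of_le h1 h2
    have hexm : ∀ γ < delta Y, ∃ m, γ < delta (y m) := by
      intro γ hγ
      rw [hYU] at hγ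
      obtain ⟨d, ⟨m, rfl⟩, hd⟩ := exists_delta_gt (X := X)
        (by rintro _ ⟨m, rfl⟩; exact hyP m) (hYU ▸ hYP).2.2 hγ
      exact ⟨m, hd⟩
    refine ⟨Y, ⟨hYP, ?_, ?_⟩, Set.subset_iUnion y 0⟩
    · -- delta Y ∈ K
      refine hK.2.2 _ (good_spec hYP.2.2).2 ?_ ?_
      · exact pos_iff_ne_zero.mp (lt_of_le_of_lt zero_le (hdYm 0))
      · intro γ hγ
        obtain ⟨m, hm⟩ := hexm γ hγ
        refine ⟨βf m, hβK m, lt_trans hm (hβgt m), ?_⟩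
        have := hβle m
        rw [← hysucc] at this
        exact lt_of_le_of_lt this (hdYm (m+1))
    · -- ∀ α < delta Y, Y ∈ C α
      intro α hα
      obtain ⟨m₀, hm₀⟩ := hexm α hα
      refine mem_club_of_tail (hC α) hmono (g := fun j => max j m₀ + 1)
        (fun j => (le_max_left j m₀).trans (Nat.le_succ _)) (fun j => ?_)
      rw [hysucc]
      refine hβC (max j m₀) α (lt_of_lt_of_le (lt_of_lt_of_le hm₀ ?_) (le_of_lt (hβgt _)))
      exact delta_mono (hyP m₀).2.2 (hyP _).2.2 (hmono (le_max_right j m₀))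
  · -- closed
    intro D hD hc hne hchain
    have hDP : D ⊆ countPow X := fun d hd => (hD hd).1
    have hUP : ⋃₀ D ∈ countPow X := sUnion_countPow hDP hc hne
    refine ⟨hUP, ?_, ?_⟩
    · by_cases hmax : ∃ d ∈ D, delta d = delta (⋃₀ D)
      · obtain ⟨d, hd, hdeq⟩ := hmax
        rw [← hdeq]; exact (hD hd).2.1
      · push_neg at hmax
        refine hK.2.2 _ (good_spec hUP.2.2).2 ?_ ?_
        · obtain ⟨d, hd⟩ := hne
          have hle : delta d ≤ delta (⋃₀ D) :=
            delta_mono (hDP hd).2.2 hUP.2.2 (Set.subset_sUnion_of_mem hd)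
          have : delta d < delta (⋃₀ D) := lt_of_le_of_ne hle (hmax d hd)
          exact pos_iff_ne_zero.mp (lt_of_le_of_lt zero_le this)
        · intro γ hγ
          obtain ⟨d, hd, hγd⟩ := exists_delta_gt hDP hUP.2.2 hγ
          refine ⟨delta d, (hD hd).2.1, hγd, ?_⟩
          exact lt_of_le_of_ne
            (delta_mono (hDP hd).2.2 hUP.2.2 (Set.subset_sUnion_of_mem hd)) (hmax d hd)
    · intro α hα
      obtain ⟨d, hd, hαd⟩ := exists_delta_gt hDP hUP.2.2 hα
      set T := {d' ∈ D | d ⊆ d'} with hT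
      have hTC : T ⊆ C α := by
        rintro d' ⟨hd', hdd'⟩
        refine (hD hd').2.2 α ?_
        exact lt_of_lt_of_le hαd (delta_mono (hDP hd).2.2 (hDP hd').2.2 hdd')
      have hUT : ⋃₀ T = ⋃₀ D := by
        apply Set.Subset.antisymm (Set.sUnion_subset_sUnion (fun d' hd' => hd'.1))
        rintro γ ⟨d'', hd'', hγ⟩
        by_cases hcase : d = d''
        · exact ⟨d, ⟨hd, Set.Subset.refl d⟩, hcase ▸ hγ⟩
        · rcases hchain hd hd'' hcase with h | h
          · exact ⟨d'', ⟨hd'', h⟩, hγ⟩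
          · exact ⟨d, ⟨hd, Set.Subset.refl d⟩, h hγ⟩
      rw [← hUT]
      exact (hC α).2.2 T hTC (hc.mono (Set.sep_subset _ _)) ⟨d, hd, Set.Subset.refl d⟩
        (hchain.mono (Set.sep_subset _ _))

end Aux5
/-- if the nonstationary ideal on `ω₁` is saturated, then every stationary
`S ⊆ [κ]^ω` is projective stationary above some stationary `A ⊆ ω₁`. -/
theorem saturated_implies_projStat_above (hsat : NSSaturated)
    (κ : Cardinal) (hκ : Cardinal.aleph0 < κ)
    (S : Set (Set Ordinal.{0})) (hS : S ⊆ countPow (Set.Iio κ.ord))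
    (hstat : IsStatIn (Set.Iio κ.ord) S) :
    ∃ A, A ⊆ Set.Iio omega1 ∧ IsStatOmega1 A ∧
      ∀ B, B ⊆ A → IsStatOmega1 B →
        IsStatIn (Set.Iio κ.ord) {x ∈ S | delta x ∈ B} := by
  by_contra hcon
  push_neg at hcon
  set X := Set.Iio κ.ord with hXdef
  -- the family of antichains of "bad" stationary sets
  set 𝒮 : Set (Set (Set Ordinal.{0})) := {W | (∀ A ∈ W, A ⊆ Set.Iio omega1 ∧
      IsStatOmega1 A ∧ ¬ IsStatIn X {x ∈ S | delta x ∈ A}) ∧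
      ∀ A ∈ W, ∀ B ∈ W, A ≠ B → ¬ IsStatOmega1 (A ∩ B)} with h𝒮
  obtain ⟨W, hWmax⟩ := zorn_subset 𝒮 (by
    intro c hc hchain
    refine ⟨⋃₀ c, ⟨?_, ?_⟩, fun s hs => Set.subset_sUnion_of_mem hs⟩
    · rintro A ⟨W, hW, hA⟩
      exact (hc hW).1 A hA
    · rintro A ⟨W1, hW1, hA⟩ B ⟨W2, hW2, hB⟩ hne
      by_cases hcase : W1 = W2
      · exact (hc hW2).2 A (hcase ▸ hA) B hB hne
      · rcases hchain hW1 hW2 hcase with h | h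
        · exact (hc hW2).2 A (h hA) B hB hne
        · exact (hc hW1).2 A hA B (h hB) hne)
  have hW𝒮 : W ∈ 𝒮 := hWmax.1
  -- maximality: every bad stationary set meets some member of W stationarily
  have hmaxcons : ∀ B, B ⊆ Set.Iio omega1 → IsStatOmega1 B →
      ¬ IsStatIn X {x ∈ S | delta x ∈ B} → ∃ B' ∈ W, IsStatOmega1 (B ∩ B') := by
    intro B hBsub hBstat hBns
    by_contra h
    push_neg at h
    have hWB : insert B W ∈ 𝒮 := by
      constructor
      · rintro A (rfl | hA)
        · exact ⟨hBsub, hBstat, hBns⟩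
        · exact hW𝒮.1 A hA
      · rintro A (rfl | hA) B' (rfl | hB') hne
        · exact absurd rfl hne
        · exact h B' hB'
        · rw [Set.inter_comm]; exact h A hA
        · exact hW𝒮.2 A hA B' hB' hne
    have hsub : W ⊆ insert B W := Set.subset_insert B W
    have : insert B W ⊆ W := hWmax.2 hWB hsub
    have hBW : B ∈ W := this (Set.mem_insert B W)
    have := h B hBW
    rw [Set.inter_self] at this
    exact this hBstat
  -- W is nonempty
  obtain ⟨B₀, hB₀sub, hB₀stat, hB₀ns⟩ :=
    hcon (Set.Iio omega1) (le_refl _) stat_Iio_omega1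
  obtain ⟨B₀', hB₀'W, _⟩ := hmaxcons B₀ hB₀sub hB₀stat hB₀ns
  have hWne : W.Nonempty := ⟨B₀', hB₀'W⟩
  -- saturation: W has size at most ℵ₁
  have hWcard : Cardinal.mk W ≤ Cardinal.aleph 1 :=
    hsat W (fun A hA => ⟨(hW𝒮.1 A hA).1, (hW𝒮.1 A hA).2.1⟩) hW𝒮.2
  -- enumerate W by ordinals below ω₁
  have hIiocard : Cardinal.mk (Set.Iio omega1) = Cardinal.aleph 1 := by
    rw [Ordinal.mk_Iio_ordinal, omega1, Cardinal.card_ord, aleph_one_lift]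
  have hle : Cardinal.mk W ≤ Cardinal.mk (Set.Iio omega1) := by rw [hIiocard]; exact hWcard
  obtain ⟨f⟩ := (Cardinal.le_def _ _).mp hle
  have : Nonempty ↥W := Set.Nonempty.to_subtype hWne
  set finv := Function.invFun (⇑f) with hfinv
  have hsurj : Function.Surjective finv := Function.invFun_surjective f.injective
  classical
  set g : Ordinal.{0} → Set Ordinal.{0} :=
    fun α => if h : α < omega1 then (finv ⟨α, h⟩ : Set Ordinal.{0}) else ∅ with hg
  have hg1 : ∀ α < omega1, g α ∈ W := by
    intro α hα
    rw [hg]; simp only [dif_pos hα]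
    exact (finv ⟨α, hα⟩).2
  have hg2 : ∀ B ∈ W, ∃ α < omega1, g α = B := by
    intro B hB
    obtain ⟨p, hp⟩ := hsurj ⟨B, hB⟩
    refine ⟨p.1, p.2, ?_⟩
    rw [hg]
    have : (⟨(p : Ordinal.{0}), p.2⟩ : ↥(Set.Iio omega1)) = p := Subtype.coe_eta p p.2
    simp only [dif_pos p.2, this, hp]
    exact dif_pos p.2
  -- choose clubs avoiding the bad sets
  have hgns : ∀ α : Ordinal.{0}, ∃ Cα, IsClubIn X Cα ∧
      (α < omega1 → {x ∈ S | delta x ∈ g α} ∩ Cα = ∅) := by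
    intro α
    by_cases h : α < omega1
    · obtain ⟨Cα, hCα, hdisj⟩ := nonstatIn_iff (hW𝒮.1 (g α) (hg1 α h)).2.2
      exact ⟨Cα, hCα, fun _ => hdisj⟩
    · exact ⟨countPow X, countPow_club X, fun h' => absurd h' h⟩
  choose C hCclub hCdisj using hgns
  -- the set of δ not captured by the diagonal union is nonstationary
  set Nab : Set Ordinal.{0} := {δ | δ < omega1 ∧ ∀ α < δ, δ ∉ g α} with hNab
  have hNns : ¬ IsStatOmega1 Nab := by
    intro hNs
    obtain ⟨B, hBsub, hBstat, hBns⟩ := hcon Nab (fun δ hδ => hδ.1) hNs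
    have hBsub' : B ⊆ Set.Iio omega1 := fun δ hδ => (hBsub hδ).1
    obtain ⟨B', hB'W, hBB'⟩ := hmaxcons B hBsub' hBstat hBns
    obtain ⟨α₀, hα₀ω, hα₀eq⟩ := hg2 B' hB'W
    obtain ⟨δ, hδBB', hδIoo⟩ := hBB' _ (Ioo_club hα₀ω)
    exact (hBsub hδBB'.1).2 α₀ hδIoo.1 (hα₀eq ▸ hδBB'.2)
  obtain ⟨K, hKclub, hKdisj⟩ := nonstatOmega1_iff hNns
  have hKsub : ∀ δ ∈ K, ∃ α < δ, δ ∈ g α := by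
    intro δ hδ
    by_contra h
    push_neg at h
    have hmem : δ ∈ Nab ∩ K := ⟨⟨hKclub.1 hδ, h⟩, hδ⟩
    rw [hKdisj] at hmem
    exact hmem
  -- the diagonal club
  have hD := Dstar_club hκ hKclub hCclub
  obtain ⟨x, hxS, hxP, hxK, hxC⟩ := hstat _ hD
  obtain ⟨α, hαδ, hδg⟩ := hKsub (delta x) hxK
  have hαω : α < omega1 := lt_trans hαδ (good_spec (hS hxS).2.2).2
  have hmem : x ∈ {x ∈ S | delta x ∈ g α} ∩ C α := ⟨⟨hxS, hδg⟩, hxC α hαδ⟩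
  rw [hCdisj α hαω] at hmem
  exact hmem
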